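/- Let ab ⇒ cd be a rewrite rule over the alphabet {0, 1, …, K}. Then: (a) G_{ab⇒cd} δ_• π_x =β π_x for every x ∈ 𝒜; (b) G_{ab⇒cd} δ_1 π_c =β π_a, and G_{ab⇒cd} δ_1 π_x =β π_⊥ for every x ∈ 𝒜 with x ≠ c; (c) G_{ab⇒cd} δ_0 π_d =β π_b, and G_{ab⇒cd} δ_0 π_x =β π_⊥ for every x ∈ 𝒜 with x ≠ d. -/

import Mathlib

set_option maxHeartbeats 1000000

/-- Untyped λ-terms with de Bruijn indices. -/
inductive Tm : Type
  | var : ℕ → Tm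
  | app : Tm → Tm → Tm
  | lam : Tm → Tm
deriving DecidableEq

/-- Simple types over the single ground atom ι. -/
inductive Ty : Type
  | atom : Ty
  | arr : Ty → Ty → Ty
deriving DecidableEq

/-- Lift a renaming under a binder. -/
def upRen (ξ : ℕ → ℕ) : ℕ → ℕ
  | 0 => 0
  | n + 1 => ξ n + 1

/-- Renaming of de Bruijn variables. -/
def rename (ξ : ℕ → ℕ) : Tm → Tm
  | .var n => .var (ξ n)
  | .app s t => .app (rename ξ s) (rename ξ t)
  | .lam s => .lam (rename (upRen ξ) s)

/-- Lift a substitution under a binder. -/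
def up (σ : ℕ → Tm) : ℕ → Tm
  | 0 => .var 0
  | n + 1 => rename Nat.succ (σ n)

/-- Parallel (capture-avoiding) substitution. -/
def subst (σ : ℕ → Tm) : Tm → Tm
  | .var n => σ n
  | .app s t => .app (subst σ s) (subst σ t)
  | .lam s => .lam (subst (up σ) s)

/-- Cons a term onto a substitution. -/
def scons (N : Tm) (σ : ℕ → Tm) : ℕ → Tm
  | 0 => N
  | n + 1 => σ n

/-- Substitution of the topmost free variable: `M[x₀ := N]` (β-substitution). -/
def subst1 (N M : Tm) : Tm := subst (scons N Tm.var) M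

/-- β-reduction: contextual closure of `(λx.M) N →β M[x := N]`. -/
inductive Step : Tm → Tm → Prop
  | beta (s t : Tm) : Step (.app (.lam s) t) (subst1 t s)
  | appL {s s' : Tm} (t : Tm) : Step s s' → Step (.app s t) (.app s' t)
  | appR (s : Tm) {t t' : Tm} : Step t t' → Step (.app s t) (.app s t')
  | lam {s s' : Tm} : Step s s' → Step (.lam s) (.lam s')

/-- β-equivalence: reflexive, transitive, symmetric closure of β-reduction. -/
def Conv (M N : Tm) : Prop := Relation.EqvGen Step M N

/-- A term is in normal form if it admits no β-reduction step. -/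
def NormalTm (M : Tm) : Prop := ∀ N, ¬ Step M N

/-- Simple type system (de Bruijn contexts as lists, innermost binder first). -/
inductive Stlc : List Ty → Tm → Ty → Prop
  | var {Γ : List Ty} {x : ℕ} {t : Ty} : Γ[x]? = some t → Stlc Γ (.var x) t
  | app {Γ : List Ty} {M N : Tm} {s t : Ty} :
      Stlc Γ M (.arr s t) → Stlc Γ N s → Stlc Γ (.app M N) t
  | lam {Γ : List Ty} {M : Tm} {s t : Ty} :
      Stlc (s :: Γ) M t → Stlc Γ (.lam M) (.arr s t)

/-- The identity term `I = λx.x`. -/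
def Itm : Tm := .lam (.var 0)

/-- `n` nested λ-abstractions. -/
def lamN : ℕ → Tm → Tm
  | 0, M => M
  | n + 1, M => .lam (lamN n M)

/-- Iterated application `M N₁ … Nₖ`. -/
def appList (M : Tm) (l : List Tm) : Tm := l.foldl .app M

/-- `n`-fold arrow type `ι → … → ι → t`. -/
def arrN : ℕ → Ty → Ty
  | 0, t => t
  | n + 1, t => .arr .atom (arrN n t)

/-- A rewrite rule `ab ⇒ cd`, stored as `((a,b),(c,d))`; symbols are naturals. -/
abbrev SRule := (ℕ × ℕ) × (ℕ × ℕ)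

/-- One-step rewriting of a simple semi-Thue system given by a list of rules. -/
def SStep (Rs : List SRule) (u v : List ℕ) : Prop :=
  ∃ x y a b c d, ((a, b), (c, d)) ∈ Rs ∧ u = x ++ a :: b :: y ∧ v = x ++ c :: d :: y

/-- Many-step rewriting `⇒*`. -/
def SRew (Rs : List SRule) : List ℕ → List ℕ → Prop := Relation.ReflTransGen (SStep Rs)

/-! Extended alphabet `𝒜 = {0,…,K} ∪ {$, •, ⊤, ⊥}` of size `K+5`, encoded as
`0,…,K` for letters, `K+1` for `$`, `K+2` for `•`, `K+3` for `⊤`, `K+4` for `⊥`. -/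

/-- The simple type `κ` with `|𝒜| = K+5` argument positions. -/
def tyK (K : ℕ) : Ty := arrN (K + 5) .atom

/-- `κ → κ`, the type of `p_j`. -/
def tyP (K : ℕ) : Ty := .arr (tyK K) (tyK K)

/-- `(κ→κ) → κ → κ`, the type of `z_0` and of each `r_i`. -/
def tyZ0 (K : ℕ) : Ty := .arr (tyP K) (.arr (tyK K) (tyK K))

/-- `(κ→κ) → ((κ→κ) → κ) → κ`, the type of `z_⋆`. -/
def tyZstar (K : ℕ) : Ty := .arr (tyP K) (.arr (.arr (tyP K) (tyK K)) (tyK K))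

/-- The variable `s_i` under the `K+5` binders `λ s_0 … s_K s_$ s_• s_⊤ s_⊥`. -/
def sv (K i : ℕ) : Tm := .var (K + 4 - i)

/-- `case x of {…}`: the application `x N_0 N_1 … N_K N_$ N_• N_⊤ N_⊥`,
where the branch for symbol `i` is `f i`. -/
def caseOf (K : ℕ) (x : Tm) (f : ℕ → Tm) : Tm := appList x ((List.range (K + 5)).map f)

/-- The projection `π_i = λ s_0 … s_⊥ . s_i`. -/
def piTm (K i : ℕ) : Tm := lamN (K + 5) (sv K i)

/-- `δ_i = λx. λ s_0 … s_⊥ . case x of {⊤ ↦ s_i} else s_⊥`. -/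
def deltaTm (K i : ℕ) : Tm :=
  .lam (lamN (K + 5) (caseOf K (.var (K + 5))
    (fun j => if j = K + 3 then sv K i else sv K (K + 4))))

/-- `H_⋆ = λh.λg.λ s_0 … s_⊥ . case (g δ_•) of {$ ↦ s_$} else s_⊥`. -/
def Hstar (K : ℕ) : Tm :=
  .lam (.lam (lamN (K + 5) (caseOf K (.app (.var (K + 5)) (deltaTm K (K + 2)))
    (fun j => if j = K + 1 then sv K (K + 1) else sv K (K + 4)))))

/-- `H_0 = λh.λx.λ s_0 … s_⊥ . case x of {1 ↦ s_$} else s_⊥`. -/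
def H0 (K : ℕ) : Tm :=
  .lam (.lam (lamN (K + 5) (caseOf K (.var (K + 5))
    (fun j => if j = 1 then sv K (K + 1) else sv K (K + 4)))))

/-- `H_R = λh.λx.λ s_0 … s_⊥ . case (h π_⊤) of {• ↦ case x of {1 ↦ s_1} else s_⊥} else s_⊥`. -/
def HR (K : ℕ) : Tm :=
  .lam (.lam (lamN (K + 5) (caseOf K (.app (.var (K + 6)) (piTm K (K + 3)))
    (fun j => if j = K + 2 then
        caseOf K (.var (K + 5)) (fun j' => if j' = 1 then sv K 1 else sv K (K + 4))
      else sv K (K + 4)))))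

/-- `G_⋆` (word expansion). -/
def Gstar (K : ℕ) : Tm :=
  .lam (.lam (lamN (K + 5) (caseOf K (.app (.var (K + 6)) (piTm K (K + 3))) (fun j =>
    if j = K + 2 then
      caseOf K (.app (.var (K + 5)) (deltaTm K (K + 2))) (fun j1 =>
        if j1 = 0 then sv K 0
        else if j1 = K + 1 then
          caseOf K (.app (.var (K + 5)) (deltaTm K 0))
            (fun j2 => if j2 = 1 then sv K (K + 1) else sv K (K + 4))
        else sv K (K + 4))
    else if j = 0 then
      caseOf K (.app (.var (K + 5)) (deltaTm K 1))
        (fun j1 => if j1 = 0 then sv K 1 else sv K (K + 4))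
    else if j = 1 then
      caseOf K (.app (.var (K + 5)) (deltaTm K (K + 2)))
        (fun j1 => if j1 = 0 then sv K 0 else sv K (K + 4))
    else sv K (K + 4)))))

/-- `G_0` (initialization with 0s). -/
def G0 (K : ℕ) : Tm :=
  .lam (.lam (lamN (K + 5) (caseOf K (.app (.var (K + 6)) (piTm K (K + 3))) (fun j =>
    if j = K + 2 then
      caseOf K (.var (K + 5))
        (fun j1 => if j1 = 0 then sv K 0 else if j1 = 1 then sv K (K + 1) else sv K (K + 4))
    else if j = 0 then
      caseOf K (.var (K + 5)) (fun j1 => if j1 = 0 then sv K 1 else sv K (K + 4))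
    else if j = 1 then
      caseOf K (.var (K + 5)) (fun j1 => if j1 = 0 then sv K 0 else sv K (K + 4))
    else sv K (K + 4)))))

/-- `G_{ab⇒cd}` (rule application), for the rule `R = ((a,b),(c,d))`. -/
def Grule (K : ℕ) (R : SRule) : Tm :=
  .lam (.lam (lamN (K + 5) (caseOf K (.app (.var (K + 6)) (piTm K (K + 3))) (fun j =>
    if j = K + 2 then
      caseOf K (.var (K + 5)) (fun j1 => sv K j1)
    else if j = 0 then
      caseOf K (.var (K + 5)) (fun j1 => if j1 = R.2.2 then sv K R.1.2 else sv K (K + 4))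
    else if j = 1 then
      caseOf K (.var (K + 5)) (fun j1 => if j1 = R.2.1 then sv K R.1.1 else sv K (K + 4))
    else sv K (K + 4)))))

/-- `G_j^i`: `δ_1` if `i = j`, `δ_0` if `i = j+1`, `δ_•` otherwise. -/
def Gji (K i j : ℕ) : Tm :=
  if i = j then deltaTm K 1 else if i = j + 1 then deltaTm K 0 else deltaTm K (K + 2)

/-! De Bruijn convention for the free variables of terms in `Q_m`, `R_m`
(for a system with `L` rules): `p_j ↦ var (m - j)` (so `p_m ↦ var 0`, …, `p_1 ↦ var (m-1)`),
`z_⋆ ↦ var m`, `z_1 ↦ var (m+1)`, `z_0 ↦ var (m+2)`, `r_i ↦ var (m+3+L-i)`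
(so `r_L ↦ var (m+3)`, …, `r_1 ↦ var (m+2+L)`). -/

/-- The type environment `Γ_m` (as a de Bruijn context). -/
def GammaEnv (L K m : ℕ) : List Ty :=
  List.replicate m (tyP K) ++ tyZstar K :: tyK K :: tyZ0 K :: List.replicate L (tyZ0 K)

/-- The set `Q_m` of terms (for a system with `L` rules). -/
inductive Qset (L : ℕ) : ℕ → Tm → Prop
  | z1 (m : ℕ) : Qset L m (.var (m + 1))
  | rule (m i j : ℕ) (M : Tm) : 1 ≤ i → i ≤ L → 1 ≤ j → j ≤ m → Qset L m M →
      Qset L m (.app (.app (.var (m + 3 + L - i)) (.var (m - j))) M)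
  | ruleEta (m i j : ℕ) (M : Tm) : 1 ≤ i → i ≤ L → 1 ≤ j → j ≤ m → Qset L m M →
      Qset L m (.app (.app (.var (m + 3 + L - i)) (.lam (.app (.var (m - j + 1)) (.var 0)))) M)

/-- The set `R_m` of terms (for a system with `L` rules). -/
inductive Rset (L : ℕ) : ℕ → Tm → Prop
  | init (m : ℕ) (N M : Tm) : Qset L m M → Rset L m (.app (.app (.var (m + 2)) N) M)
  | expand (m : ℕ) (N M : Tm) : Rset L (m + 1) M → Rset L m (.app (.app (.var m) N) (.lam M))

/-- A simultaneous substitution on the free variables of terms in `Q_m`/`R_m`: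
`p_j ↦ P j`, `z_⋆ ↦ Xstar`, `z_1 ↦ X1`, `z_0 ↦ X0`, `r_i ↦ Xr i`; other variables fixed. -/
def mkSub (L m : ℕ) (P : ℕ → Tm) (Xstar X1 X0 : Tm) (Xr : ℕ → Tm) : ℕ → Tm := fun k =>
  if k < m then P (m - k)
  else if k = m then Xstar
  else if k = m + 1 then X1
  else if k = m + 2 then X0
  else if k < m + 3 + L then Xr (m + 3 + L - k)
  else .var k

/-- The substitution `S_F` combined with `[p_j := P j]`; the fixed free variable `u`
is taken to be `var 0` (in the resulting scope). -/
def SF (L m : ℕ) (P : ℕ → Tm) : ℕ → Tm :=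
  mkSub L m P (.lam (.lam (.app (.var 0) Itm))) (.var 0) (.lam Itm) (fun _ => Itm)

/-- The substitution `S_H` combined with `[p_j := P j]`. -/
def SH (L K m : ℕ) (P : ℕ → Tm) : ℕ → Tm :=
  mkSub L m P (Hstar K) (piTm K 1) (H0 K) (fun _ => HR K)

/-- The substitution `S_G` combined with `[p_j := P j]` (`r_i ↦ G_{R_i}`). -/
def SG (K : ℕ) (Rs : List SRule) (m : ℕ) (P : ℕ → Tm) : ℕ → Tm :=
  mkSub Rs.length m P (Gstar K) (piTm K 1) (G0 K)
    (fun i => Grule K (Rs.getD (i - 1) ((0, 0), (0, 0))))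

/-- The simple type `σ_𝔖 = Γ_1(r_1) → ⋯ → Γ_1(r_L) → Γ_1(z_0) → Γ_1(z_1) → Γ_1(z_⋆) → Γ_1(p_1) → κ`. -/
def sigmaTy (L K : ℕ) : Ty :=
  (List.replicate L (tyZ0 K) ++ [tyZ0 K, tyK K, tyZstar K, tyP K]).foldr .arr (tyK K)
/-! ### Auxiliary lemmas for `Grule_spec` -/

theorem rename_ext : ∀ (M : Tm) {ξ ζ : ℕ → ℕ}, (∀ n, ξ n = ζ n) → rename ξ M = rename ζ M
  | .var n, _, _, h => by simp [rename, h]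
  | .app s t, _, _, h => by simp [rename, rename_ext s h, rename_ext t h]
  | .lam s, ξ, ζ, h => by
      simp only [rename]
      congr 1
      exact rename_ext s (fun n => by cases n <;> simp [upRen, h])

theorem rename_id : ∀ (M : Tm) {ξ : ℕ → ℕ}, (∀ n, ξ n = n) → rename ξ M = M
  | .var n, _, h => by simp [rename, h]
  | .app s t, _, h => by simp [rename, rename_id s h, rename_id t h]
  | .lam s, ξ, h => by
      simp only [rename]
      congr 1
      exact rename_id s (fun n => by cases n <;> simp [upRen, h])

theorem rename_comp : ∀ (M : Tm) (ξ ζ : ℕ → ℕ),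
    rename ξ (rename ζ M) = rename (fun n => ξ (ζ n)) M
  | .var n, _, _ => rfl
  | .app s t, ξ, ζ => by simp [rename, rename_comp s, rename_comp t]
  | .lam s, ξ, ζ => by
      simp only [rename]
      congr 1
      rw [rename_comp s]
      exact rename_ext s (fun n => by cases n <;> simp [upRen])

theorem subst_ext : ∀ (M : Tm) {σ τ : ℕ → Tm}, (∀ n, σ n = τ n) → subst σ M = subst τ M
  | .var n, _, _, h => h n
  | .app s t, _, _, h => by simp [subst, subst_ext s h, subst_ext t h]
  | .lam s, σ, τ, h => by
      simp only [subst]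
      congr 1
      exact subst_ext s (fun n => by cases n <;> simp [up, h])

theorem subst_var : ∀ (M : Tm) {σ : ℕ → Tm}, (∀ n, σ n = .var n) → subst σ M = M
  | .var n, _, h => h n
  | .app s t, _, h => by simp [subst, subst_var s h, subst_var t h]
  | .lam s, σ, h => by
      simp only [subst]
      congr 1
      exact subst_var s (fun n => by cases n <;> simp [up, h, rename])

theorem subst_rename : ∀ (M : Tm) (σ : ℕ → Tm) (ξ : ℕ → ℕ),
    subst σ (rename ξ M) = subst (fun n => σ (ξ n)) M
  | .var n, _, _ => rfl
  | .app s t, σ, ξ => by simp [rename, subst, subst_rename s, subst_rename t]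
  | .lam s, σ, ξ => by
      simp only [rename, subst]
      congr 1
      rw [subst_rename s]
      exact subst_ext s (fun n => by cases n <;> simp [up, upRen])

theorem rename_subst : ∀ (M : Tm) (ξ : ℕ → ℕ) (σ : ℕ → Tm),
    rename ξ (subst σ M) = subst (fun n => rename ξ (σ n)) M
  | .var n, _, _ => rfl
  | .app s t, ξ, σ => by simp [rename, subst, rename_subst s, rename_subst t]
  | .lam s, ξ, σ => by
      simp only [rename, subst]
      congr 1
      rw [rename_subst s]
      exact subst_ext s (fun n => by
        cases n with
        | zero => rfl
        | succ n =>
          simp only [up, rename_comp]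
          exact rename_ext _ (fun m => by simp [upRen]))

theorem subst_comp : ∀ (M : Tm) (σ τ : ℕ → Tm),
    subst σ (subst τ M) = subst (fun n => subst σ (τ n)) M
  | .var n, _, _ => rfl
  | .app s t, σ, τ => by simp [subst, subst_comp s, subst_comp t]
  | .lam s, σ, τ => by
      simp only [subst]
      congr 1
      rw [subst_comp s]
      exact subst_ext s (fun n => by
        cases n with
        | zero => rfl
        | succ n =>
          simp [up, subst_rename, rename_subst])

theorem rename_as_subst : ∀ (M : Tm) (ξ : ℕ → ℕ),
    rename ξ M = subst (fun n => .var (ξ n)) M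
  | .var n, _ => rfl
  | .app s t, ξ => by simp [rename, subst, rename_as_subst s, rename_as_subst t]
  | .lam s, ξ => by
      simp only [rename, subst]
      congr 1
      rw [rename_as_subst s]
      exact subst_ext s (fun n => by cases n <;> simp [up, upRen, rename])

/-- Iterated `up`. -/
def upN : ℕ → (ℕ → Tm) → (ℕ → Tm)
  | 0, σ => σ
  | n + 1, σ => upN n (up σ)

theorem subst_lamN : ∀ (n : ℕ) (σ : ℕ → Tm) (M : Tm),
    subst σ (lamN n M) = lamN n (subst (upN n σ) M)
  | 0, _, _ => rfl
  | n + 1, σ, M => by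
      simp only [lamN, subst, subst_lamN n]
      rfl

theorem upN_ge : ∀ (n : ℕ) (σ : ℕ → Tm) (k : ℕ),
    upN n σ (n + k) = rename (fun m => m + n) (σ k)
  | 0, σ, k => by
      simp only [upN, Nat.zero_add]
      exact (rename_id _ (fun m => rfl)).symm
  | n + 1, σ, k => by
      have : n + 1 + k = n + (k + 1) := by omega
      rw [upN, this, upN_ge n]
      simp only [up, rename_comp]
      exact rename_ext _ (fun m => by omega)

theorem upN_lt : ∀ (n : ℕ) (σ : ℕ → Tm) (k : ℕ), k < n → upN n σ k = .var k := by
  intro n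
  induction n with
  | zero => intro σ k h; omega
  | succ n ih =>
      intro σ k h
      rw [upN]
      rcases Nat.lt_or_ge k n with h' | h'
      · exact ih _ _ h'
      · have hk : k = n := by omega
        rw [hk]
        have := upN_ge n (up σ) 0
        simpa [up, rename] using this

theorem subst_appList : ∀ (l : List Tm) (σ : ℕ → Tm) (M : Tm),
    subst σ (appList M l) = appList (subst σ M) (l.map (subst σ))
  | [], _, _ => rfl
  | a :: l, σ, M => by simp only [appList, List.foldl, List.map]; exact subst_appList l σ _

theorem subst_caseOf (K : ℕ) (σ : ℕ → Tm) (x : Tm) (f : ℕ → Tm) :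
    subst σ (caseOf K x f) = caseOf K (subst σ x) (fun j => subst σ (f j)) := by
  simp only [caseOf, subst_appList, List.map_map]
  rfl

/-! ### β-conversion lemmas -/

theorem Conv.refl' (M : Tm) : Conv M M := Relation.EqvGen.refl M

theorem conv_of_step {M N : Tm} (h : Step M N) : Conv M N := Relation.EqvGen.rel _ _ h

theorem Conv.trans' {M N P : Tm} (h1 : Conv M N) (h2 : Conv N P) : Conv M P :=
  Relation.EqvGen.trans _ _ _ h1 h2

theorem conv_appL {s s' : Tm} (t : Tm) (h : Conv s s') : Conv (.app s t) (.app s' t) := by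
  induction h with
  | rel _ _ h => exact Relation.EqvGen.rel _ _ (.appL t h)
  | refl _ => exact Relation.EqvGen.refl _
  | symm _ _ _ ih => exact Relation.EqvGen.symm _ _ ih
  | trans _ _ _ _ _ ih1 ih2 => exact Relation.EqvGen.trans _ _ _ ih1 ih2

theorem conv_appR (s : Tm) {t t' : Tm} (h : Conv t t') : Conv (.app s t) (.app s t') := by
  induction h with
  | rel _ _ h => exact Relation.EqvGen.rel _ _ (.appR s h)
  | refl _ => exact Relation.EqvGen.refl _
  | symm _ _ _ ih => exact Relation.EqvGen.symm _ _ ih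
  | trans _ _ _ _ _ ih1 ih2 => exact Relation.EqvGen.trans _ _ _ ih1 ih2

theorem conv_lam {s s' : Tm} (h : Conv s s') : Conv (.lam s) (.lam s') := by
  induction h with
  | rel _ _ h => exact Relation.EqvGen.rel _ _ (.lam h)
  | refl _ => exact Relation.EqvGen.refl _
  | symm _ _ _ ih => exact Relation.EqvGen.symm _ _ ih
  | trans _ _ _ _ _ ih1 ih2 => exact Relation.EqvGen.trans _ _ _ ih1 ih2

theorem conv_lamN (n : ℕ) {s s' : Tm} (h : Conv s s') : Conv (lamN n s) (lamN n s') := by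
  induction n with
  | zero => exact h
  | succ n ih => exact conv_lam ih

theorem conv_appList {M M' : Tm} (l : List Tm) (h : Conv M M') :
    Conv (appList M l) (appList M' l) := by
  induction l generalizing M M' with
  | nil => exact h
  | cons a l ih => exact ih (conv_appL a h)

theorem conv_beta {M N R : Tm} (h : subst1 N M = R) : Conv (.app (.lam M) N) R :=
  h ▸ conv_of_step (Step.beta M N)

/-- Selecting an argument: dropping `n` lambdas over a shifted term. -/
theorem appList_drop : ∀ (l : List Tm) (a : Tm),
    Conv (appList (lamN l.length (rename (fun m => m + l.length) a)) l) a
  | [], a => by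
      have h0 : rename (fun m => m + 0) a = a := rename_id a (fun m => rfl)
      have h0' : rename (fun m => m) a = a := rename_id a (fun m => rfl)
      simpa [appList, lamN, h0, h0'] using Conv.refl' a
  | b :: l, a => by
      set n := l.length with hn
      have hstep : Conv (appList (lamN (n+1) (rename (fun m => m + (n+1)) a)) (b :: l))
          (appList (lamN n (rename (fun m => m + n) a)) l) := by
        show Conv (appList (.app (.lam (lamN n (rename (fun m => m + (n+1)) a))) b) l) _
        refine conv_appList l (conv_beta ?_)
        rw [subst1, subst_lamN, subst_rename]
        congr 1
        rw [rename_as_subst]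
        refine subst_ext a (fun k => ?_)
        have : k + (n + 1) = n + (k + 1) := by omega
        rw [this, upN_ge]
        simp [scons, rename]
      exact hstep.trans' (appList_drop l a)

/-- Selecting an argument: projection out of an argument list. -/
theorem appList_get : ∀ (l : List Tm) (j : ℕ), j < l.length →
    Conv (appList (lamN l.length (.var j)) l) (l.getD (l.length - 1 - j) (.var 0))
  | [], j, h => by simp at h
  | a :: l, j, h => by
      set n := l.length with hn
      have hstep : Conv (appList (lamN (n+1) (.var j)) (a :: l))
          (appList (lamN n (upN n (scons a Tm.var) j)) l) := by
        show Conv (appList (.app (.lam (lamN n (.var j))) a) l) _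
        refine conv_appList l (conv_beta ?_)
        rw [subst1, subst_lamN]
        rfl
      rcases Nat.lt_or_ge j n with h' | h'
      · rw [upN_lt n _ j h'] at hstep
        refine hstep.trans' ((appList_get l j h').trans' ?_)
        have h1 : (a :: l).length - 1 - j = (l.length - 1 - j) + 1 := by
          simp; omega
        rw [h1, List.getD_cons_succ]
        exact Conv.refl' _
      · have hj : j = n := by simp at h; omega
        rw [hj] at hstep ⊢
        have he : upN n (scons a Tm.var) n = rename (fun m => m + n) a := by
          have := upN_ge n (scons a Tm.var) 0
          simpa [scons] using this
        rw [he] at hstep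
        refine hstep.trans' ((appList_drop l a).trans' ?_)
        have h2 : (a :: l).length - 1 - n = 0 := by simp [hn]
        rw [h2, List.getD_cons_zero]
        exact Conv.refl' a

/-- Case analysis on a projection reduces to the selected branch. -/
theorem case_pi (K y : ℕ) (hy : y ≤ K + 4) (f : ℕ → Tm) :
    Conv (caseOf K (piTm K y) f) (f y) := by
  have hlen : ((List.range (K + 5)).map f).length = K + 5 := by simp
  have hj : K + 4 - y < K + 5 := by omega
  have := appList_get ((List.range (K + 5)).map f) (K + 4 - y) (by rw [hlen]; exact hj)
  rw [hlen] at this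
  have hi : K + 5 - 1 - (K + 4 - y) = y := by omega
  rw [hi] at this
  have hget : ((List.range (K + 5)).map f).getD y (.var 0) = f y := by
    have hy5 : y < K + 5 := by omega
    simp [List.getD, hy5]
  rw [hget] at this
  exact this

/-! ### Small computation rules for `subst` (as `rfl` lemmas for `rw`) -/

theorem subst_app (σ : ℕ → Tm) (s t : Tm) :
    subst σ (.app s t) = .app (subst σ s) (subst σ t) := rfl

theorem subst_var' (σ : ℕ → Tm) (n : ℕ) : subst σ (.var n) = σ n := rfl

theorem subst_lam (σ : ℕ → Tm) (s : Tm) : subst σ (.lam s) = .lam (subst (up σ) s) := rfl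

theorem caseOf_congr {K : ℕ} {x x' : Tm} {f f' : ℕ → Tm}
    (hx : x = x') (hf : ∀ j, f j = f' j) : caseOf K x f = caseOf K x' f' := by
  have : f = f' := funext hf
  rw [hx, this]

/-! ### Closedness of `piTm` and `deltaTm` under substitution/renaming -/

theorem subst_sv (K v : ℕ) (σ : ℕ → Tm) (hσ : ∀ k, k ≤ K + 4 → σ k = .var k) :
    subst σ (sv K v) = sv K v := by
  show σ (K + 4 - v) = sv K v
  rw [hσ _ (by omega)]
  rfl

theorem subst_piTm (K y : ℕ) (σ : ℕ → Tm) : subst σ (piTm K y) = piTm K y := by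
  rw [piTm, subst_lamN]
  refine congrArg (lamN (K + 5)) ?_
  exact subst_sv K y _ (fun k hk => upN_lt _ _ _ (by omega))

theorem rename_piTm (K y : ℕ) (ξ : ℕ → ℕ) : rename ξ (piTm K y) = piTm K y := by
  rw [rename_as_subst, subst_piTm]

theorem subst_deltaTm (K i : ℕ) (σ : ℕ → Tm) : subst σ (deltaTm K i) = deltaTm K i := by
  rw [deltaTm, subst_lam, subst_lamN, subst_caseOf]
  refine congrArg Tm.lam (congrArg (lamN (K + 5)) (caseOf_congr ?_ ?_))
  · rw [subst_var', show upN (K + 5) (up σ) = upN (K + 6) σ from rfl]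
    exact upN_lt _ _ _ (by omega)
  · intro j
    split <;>
      exact subst_sv K _ _ (fun k hk => by
        rw [show upN (K + 5) (up σ) = upN (K + 6) σ from rfl]
        exact upN_lt _ _ _ (by omega))

theorem rename_deltaTm (K i : ℕ) (ξ : ℕ → ℕ) : rename ξ (deltaTm K i) = deltaTm K i := by
  rw [rename_as_subst, subst_deltaTm]

/-! ### Double β-step -/

theorem app2_conv (B D P : Tm) :
    Conv (.app (.app (.lam (.lam B)) D) P) (subst (scons P (scons D Tm.var)) B) := by
  have s1 : Conv (.app (.app (.lam (.lam B)) D) P)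
      (.app (.lam (subst (up (scons D Tm.var)) B)) P) :=
    conv_appL P (conv_beta rfl)
  refine s1.trans' (conv_beta ?_)
  rw [subst1, subst_comp]
  refine subst_ext B (fun k => ?_)
  match k with
  | 0 => rfl
  | 1 => show subst (scons P Tm.var) (rename Nat.succ D) = D
         rw [subst_rename]; exact subst_var D (fun n => rfl)
  | (k+2) => rfl

/-! ### Behavior of `deltaTm` -/

theorem delta_pi (K i : ℕ) : Conv (.app (deltaTm K i) (piTm K (K + 3))) (piTm K i) := by
  have h1 : Conv (.app (deltaTm K i) (piTm K (K + 3)))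
      (lamN (K + 5) (caseOf K (piTm K (K + 3))
        (fun j => if j = K + 3 then sv K i else sv K (K + 4)))) := by
    rw [deltaTm]
    refine conv_beta ?_
    rw [subst1, subst_lamN, subst_caseOf]
    refine congrArg (lamN (K + 5)) (caseOf_congr ?_ ?_)
    · rw [subst_var', show K + 5 = (K + 5) + 0 from rfl, upN_ge]
      exact rename_piTm _ _ _
    · intro j
      split <;> exact subst_sv K _ _ (fun k hk => upN_lt _ _ _ (by omega))
  refine h1.trans' ?_
  have h2 := conv_lamN (K + 5) (case_pi K (K + 3) (by omega)
    (fun j => if j = K + 3 then sv K i else sv K (K + 4)))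
  simpa [piTm] using h2

/-! ### Main reduction of `Grule` applied to `deltaTm` and a projection -/

theorem grule_red (K a b c d i x : ℕ) (hi : i ≤ K + 4) :
    Conv (.app (.app (Grule K ((a, b), (c, d))) (deltaTm K i)) (piTm K x))
      (lamN (K + 5)
        (if i = K + 2 then caseOf K (piTm K x) (fun j1 => sv K j1)
         else if i = 0 then
           caseOf K (piTm K x) (fun j1 => if j1 = d then sv K b else sv K (K + 4))
         else if i = 1 then
           caseOf K (piTm K x) (fun j1 => if j1 = c then sv K a else sv K (K + 4))
         else sv K (K + 4))) := by
  set D := deltaTm K i with hD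
  set P := piTm K x with hP
  set F : ℕ → Tm := fun j =>
    if j = K + 2 then caseOf K (.var (K + 5)) (fun j1 => sv K j1)
    else if j = 0 then
      caseOf K (.var (K + 5)) (fun j1 => if j1 = d then sv K b else sv K (K + 4))
    else if j = 1 then
      caseOf K (.var (K + 5)) (fun j1 => if j1 = c then sv K a else sv K (K + 4))
    else sv K (K + 4) with hF
  set F' : ℕ → Tm := fun j =>
    if j = K + 2 then caseOf K P (fun j1 => sv K j1)
    else if j = 0 then caseOf K P (fun j1 => if j1 = d then sv K b else sv K (K + 4))
    else if j = 1 then caseOf K P (fun j1 => if j1 = c then sv K a else sv K (K + 4))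
    else sv K (K + 4) with hF'
  have hG : Grule K ((a, b), (c, d)) =
      .lam (.lam (lamN (K + 5) (caseOf K (.app (.var (K + 6)) (piTm K (K + 3))) F))) := by
    rw [Grule, hF]
  rw [hG]
  have h1 := app2_conv (lamN (K + 5) (caseOf K (.app (.var (K + 6)) (piTm K (K + 3))) F)) D P
  set σ2 := scons P (scons D Tm.var) with hσ2
  have hv6 : upN (K + 5) σ2 (K + 6) = D := by
    rw [show K + 6 = (K + 5) + 1 from rfl, upN_ge]
    show rename _ D = D
    rw [hD]
    exact rename_deltaTm _ _ _
  have hv5 : upN (K + 5) σ2 (K + 5) = P := by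
    rw [show K + 5 = (K + 5) + 0 from rfl, upN_ge]
    show rename _ P = P
    rw [hP]
    exact rename_piTm _ _ _
  have hlow : ∀ k, k ≤ K + 4 → upN (K + 5) σ2 k = .var k :=
    fun k hk => upN_lt _ _ _ (by omega)
  have h2 : subst σ2 (lamN (K + 5) (caseOf K (.app (.var (K + 6)) (piTm K (K + 3))) F))
      = lamN (K + 5) (caseOf K (.app D (piTm K (K + 3))) F') := by
    rw [subst_lamN, subst_caseOf]
    refine congrArg (lamN (K + 5)) (caseOf_congr ?_ ?_)
    · rw [subst_app, subst_var', hv6, subst_piTm]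
    · intro j
      rw [hF, hF']
      simp only []
      split_ifs
      · rw [subst_caseOf, subst_var', hv5]
        exact caseOf_congr rfl (fun j1 => subst_sv K _ _ hlow)
      · rw [subst_caseOf, subst_var', hv5]
        refine caseOf_congr rfl (fun j1 => ?_)
        split <;> exact subst_sv K _ _ hlow
      · rw [subst_caseOf, subst_var', hv5]
        refine caseOf_congr rfl (fun j1 => ?_)
        split <;> exact subst_sv K _ _ hlow
      · exact subst_sv K _ _ hlow
  rw [h2] at h1
  refine h1.trans' ?_
  have h3 : Conv (caseOf K (.app D (piTm K (K + 3))) F') (caseOf K (piTm K i) F') :=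
    conv_appList _ (delta_pi K i)
  have h4 : Conv (caseOf K (piTm K i) F') (F' i) := case_pi K i hi F'
  refine (conv_lamN (K + 5) (h3.trans' h4)).trans' ?_
  rw [hF']
  exact Conv.refl' _


/-- Behavior of `G_{ab⇒cd}` for a rewrite rule `ab ⇒ cd` over the alphabet `{0,1,…,K}`:
(a) `G_{ab⇒cd} δ_• π_x =β π_x` for every `x ∈ 𝒜`;
(b) `G_{ab⇒cd} δ_1 π_c =β π_a`, and `G_{ab⇒cd} δ_1 π_x =β π_⊥` for `x ∈ 𝒜`, `x ≠ c`;
(c) `G_{ab⇒cd} δ_0 π_d =β π_b`, and `G_{ab⇒cd} δ_0 π_x =β π_⊥` for `x ∈ 𝒜`, `x ≠ d`. -/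
theorem Grule_spec (K : ℕ) (hK : 1 ≤ K) (a b c d : ℕ)
    (ha : a ≤ K) (hb : b ≤ K) (hc : c ≤ K) (hd : d ≤ K) :
    (∀ x, x ≤ K + 4 →
      Conv (.app (.app (Grule K ((a, b), (c, d))) (deltaTm K (K + 2))) (piTm K x)) (piTm K x)) ∧
    (Conv (.app (.app (Grule K ((a, b), (c, d))) (deltaTm K 1)) (piTm K c)) (piTm K a) ∧
      ∀ x, x ≤ K + 4 → x ≠ c →
        Conv (.app (.app (Grule K ((a, b), (c, d))) (deltaTm K 1)) (piTm K x))
          (piTm K (K + 4))) ∧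
    (Conv (.app (.app (Grule K ((a, b), (c, d))) (deltaTm K 0)) (piTm K d)) (piTm K b) ∧
      ∀ x, x ≤ K + 4 → x ≠ d →
        Conv (.app (.app (Grule K ((a, b), (c, d))) (deltaTm K 0)) (piTm K x))
          (piTm K (K + 4))) := by
  refine ⟨?_, ⟨?_, ?_⟩, ⟨?_, ?_⟩⟩
  · intro x hx
    have h := grule_red K a b c d (K + 2) x (by omega)
    rw [if_pos rfl] at h
    refine h.trans' ?_
    have h2 := conv_lamN (K + 5) (case_pi K x hx (fun j1 => sv K j1))
    simpa [piTm] using h2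
  · have h := grule_red K a b c d 1 c (by omega)
    rw [if_neg (by omega), if_neg (by omega), if_pos rfl] at h
    refine h.trans' ?_
    have h2 := conv_lamN (K + 5) (case_pi K c (by omega)
      (fun j1 => if j1 = c then sv K a else sv K (K + 4)))
    rw [if_pos rfl] at h2
    simpa [piTm] using h2
  · intro x hx hxc
    have h := grule_red K a b c d 1 x (by omega)
    rw [if_neg (by omega), if_neg (by omega), if_pos rfl] at h
    refine h.trans' ?_
    have h2 := conv_lamN (K + 5) (case_pi K x hx
      (fun j1 => if j1 = c then sv K a else sv K (K + 4)))
    rw [if_neg hxc] at h2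
    simpa [piTm] using h2
  · have h := grule_red K a b c d 0 d (by omega)
    rw [if_neg (by omega), if_pos rfl] at h
    refine h.trans' ?_
    have h2 := conv_lamN (K + 5) (case_pi K d (by omega)
      (fun j1 => if j1 = d then sv K b else sv K (K + 4)))
    rw [if_pos rfl] at h2
    simpa [piTm] using h2
  · intro x hx hxd
    have h := grule_red K a b c d 0 x (by omega)
    rw [if_neg (by omega), if_pos rfl] at h
    refine h.trans' ?_
    have h2 := conv_lamN (K + 5) (case_pi K x hx
      (fun j1 => if j1 = d then sv K b else sv K (K + 4)))
    rw [if_neg hxd] at h2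
    simpa [piTm] using h2
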